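/- arXiv:2408.15487 — 2 statements merged into one kernel-verified Lean document; each statement's English description precedes it below -/
import Mathlib

section
/- Let r, k, n be positive integers with 2k ≥ r+4 and n ≥ 20(r+2)²k, and let G be a C_{2k+1}-free graph on n vertices with e(G) ≥ ⌊(n−r+1)²/4⌋ + C(r,2). Then for every path P in G of even order at most 2k with endpoints x and y, the set (N(x) ∩ N(y)) \ V(P) has at most 8k elements. -/
/-- `G` contains no cycle with `ℓ` vertices, i.e. `G` is `C_ℓ`-free. -/
def CycleFree {V : Type*} (ℓ : ℕ) (G : SimpleGraph V) : Prop :=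
  ∀ (v : V) (c : G.Walk v v), c.IsCycle → c.length ≠ ℓ

/-!
Downward induction on the order of the path. For a path `P` of order `2k`, a common neighbour of
its endpoints off `P` closes a `C_{2k+1}`. For a shorter path, two common neighbours `w₁, w₂` off
`P` extend it to the even path `w₁ P w₂`, so by induction they have at most `8k + 2k` common
neighbours. If more than `8k` common neighbours lay off `P`, Cauchy–Schwarz on these codegrees
bounds the degrees of the `8k + 1` of smallest degree, and deleting them leaves a graph on `m`
vertices with at least `m²/4 + (k+1)m` edges. Repeatedly deleting a vertex of low degree then
yields a nonempty `B` in which every vertex has more than `(|B| + 2k + 1)/2` neighbours; any two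
vertices of `B` then have `2k + 2` common neighbours in `B`, and a greedy path of order `2k` in
`B` closes to a `C_{2k+1}`.
-/

open Finset

lemma Finset.exists_subset_card_eq_card_mul_sum_le {α : Type*} [DecidableEq α] (f : α → ℕ)
    (s : Finset α) {m : ℕ} (hm : m ≤ #s) :
    ∃ u ⊆ s, #u = m ∧ #s * ∑ a ∈ u, f a ≤ m * ∑ a ∈ s, f a := by
  induction s using Finset.strongInduction with
  | H s ih =>
  obtain hms | hms := hm.eq_or_lt
  · exact ⟨s, subset_rfl, hms.symm, by rw [hms]⟩
  obtain ⟨a, ha, hmax⟩ := s.exists_max_image f (card_pos.1 (by omega))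
  have hcard : #s = #(s.erase a) + 1 := (card_erase_add_one ha).symm
  obtain ⟨u, hus, hu, hsum⟩ := ih _ (erase_ssubset ha) (by omega)
  have hu_le : ∑ b ∈ u, f b ≤ m * f a := by
    grw [sum_le_card_nsmul u f (f a) fun b hb ↦ hmax b (mem_of_mem_erase (hus hb)), hu,
      smul_eq_mul]
  refine ⟨u, hus.trans (erase_subset a s), hu, ?_⟩
  rw [hcard, ← add_sum_erase s f ha]
  linarith

lemma mul_le_of_twenty_mul_sq_mul_le {r k n : ℕ} (hr : 1 ≤ r)
    (hn : 20 * (r + 2) ^ 2 * k ≤ n) : 180 * k ≤ n :=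
  le_trans (Nat.mul_le_mul_right k (Nat.mul_le_mul_left 20 (show 9 ≤ (r + 2) ^ 2 by nlinarith)))
    hn

lemma sq_add_eight_mul_le_sq {r k n : ℕ} (hr : 1 ≤ r) (hrk : r + 4 ≤ 2 * k)
    (hn : 20 * (r + 2) ^ 2 * k ≤ n) :
    (n - (8 * k + 1)) ^ 2 + (4 * k + 4) * (n - (8 * k + 1)) + 8 * k * n + 3
      ≤ (n - r + 1) ^ 2 := by
  have h180 := mul_le_of_twenty_mul_sq_mul_le hr hn
  zify [show r ≤ n by omega, show 8 * k + 1 ≤ n by omega]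
  have h180' : (180 : ℤ) * k ≤ n := by exact_mod_cast h180
  have hn' : (20 : ℤ) * (r + 2) ^ 2 * k ≤ n := by exact_mod_cast hn
  have hr' : (1 : ℤ) ≤ r := by exact_mod_cast hr
  have hrk' : (r : ℤ) + 4 ≤ 2 * k := by exact_mod_cast hrk
  rcases le_or_gt (r : ℤ) k with hcase | hcase
  · nlinarith [mul_le_mul_of_nonneg_right h180' (by positivity : (0:ℤ) ≤ k),
      mul_le_mul_of_nonneg_left h180' (by linarith : (0:ℤ) ≤ 2 * k - 2 * r)]
  · nlinarith [mul_le_mul_of_nonneg_left hn' (by norm_num : (0:ℤ) ≤ 8),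
      mul_pos (by linarith : (0:ℤ) < r) (by linarith : (0:ℤ) < k)]

lemma five_mul_sq_add_le_five_mul_sq {r k n : ℕ} (hr : 1 ≤ r) (hrk : r + 4 ≤ 2 * k)
    (hn : 20 * (r + 2) ^ 2 * k ≤ n) :
    5 * (n - (8 * k + 1)) ^ 2 + (20 * k + 20) * (n - (8 * k + 1)) + (39 * k + 40) * n + 25
      ≤ 5 * (n - r + 1) ^ 2 := by
  have h180 := mul_le_of_twenty_mul_sq_mul_le hr hn
  zify [show r ≤ n by omega, show 8 * k + 1 ≤ n by omega]
  have h180' : (180 : ℤ) * k ≤ n := by exact_mod_cast h180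
  have hr' : (1 : ℤ) ≤ r := by exact_mod_cast hr
  have hrk' : (r : ℤ) + 4 ≤ 2 * k := by exact_mod_cast hrk
  nlinarith [mul_le_mul_of_nonneg_right h180' (by positivity : (0:ℤ) ≤ k)]

lemma not_le_twenty_mul_of_sq_le {k n D : ℕ} (hk : 3 ≤ k) (hn : 180 * k ≤ n)
    (hD : (2 * k - 1) * D ^ 2 ≤ 20 * k ^ 2 * n * (8 * k + 1) ^ 2) :
    ¬ (39 * k + 40) * n + 15 ≤ 20 * D := by
  intro hY
  obtain ⟨j, rfl⟩ : ∃ j, k = j + 1 := ⟨k - 1, by omega⟩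
  have hn0 : 0 < n := by omega
  rw [show 2 * (j + 1) - 1 = 2 * j + 1 by omega] at hD
  have h1 : (2 * j + 1) * ((39 * (j + 1) + 40) * n) ^ 2 ≤ 400 * ((2 * j + 1) * D ^ 2) := by
    have := Nat.pow_le_pow_left (show (39 * (j + 1) + 40) * n ≤ 20 * D by omega) 2
    nlinarith
  have h2 : (2 * j + 1) * (39 * (j + 1) + 40) ^ 2 * n
      ≤ 8000 * (j + 1) ^ 2 * (8 * (j + 1) + 1) ^ 2 := by
    refine Nat.le_of_mul_le_mul_left ?_ hn0
    nlinarith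
  nlinarith [Nat.mul_le_mul_left ((2 * j + 1) * (39 * (j + 1) + 40) ^ 2) hn]

/-- `D` is the degree sum over `t` vertices with pairwise codegrees at most `10k`, and `D'` the
degree sum over `8k + 1` of them of below-average degree. -/
lemma sq_add_four_mul_le_sq_of_degree_sums {r k n t D D' : ℕ} (hr : 1 ≤ r)
    (hrk : r + 4 ≤ 2 * k) (hn : 20 * (r + 2) ^ 2 * k ≤ n) (ht : 8 * k + 1 ≤ t)
    (hD : D ^ 2 ≤ n * (D + 10 * k * t ^ 2)) (hD' : t * D' ≤ (8 * k + 1) * D) :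
    (n - (8 * k + 1)) ^ 2 + (4 * k + 4) * (n - (8 * k + 1)) + 4 * D' + 3 ≤ (n - r + 1) ^ 2 := by
  rcases le_or_gt D (2 * k * n) with hlow | hhigh
  · have : t * (4 * D') ≤ t * (8 * k * n) := by nlinarith
    have := Nat.le_of_mul_le_mul_left this (by omega)
    linarith [sq_add_eight_mul_le_sq hr hrk hn]
  · by_contra! h
    have hsq : (2 * k - 1) * D ^ 2 ≤ 20 * k ^ 2 * n * t ^ 2 := by
      have h2k : (2 * k - 1) * D ^ 2 + D ^ 2 = 2 * k * D ^ 2 := by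
        rw [← Nat.succ_mul]; congr 1; omega
      nlinarith [Nat.mul_le_mul_left (2 * k) hD, Nat.mul_le_mul_right D hhigh.le]
    have hsq' : (2 * k - 1) * D' ^ 2 ≤ 20 * k ^ 2 * n * (8 * k + 1) ^ 2 := by
      refine Nat.le_of_mul_le_mul_left ?_ (pow_pos (by omega : 0 < t) 2)
      calc t ^ 2 * ((2 * k - 1) * D' ^ 2) = (2 * k - 1) * (t * D') ^ 2 := by ring
        _ ≤ (2 * k - 1) * ((8 * k + 1) * D) ^ 2 := by grw [hD']
        _ = (8 * k + 1) ^ 2 * ((2 * k - 1) * D ^ 2) := by ring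
        _ ≤ (8 * k + 1) ^ 2 * (20 * k ^ 2 * n * t ^ 2) := by grw [hsq]
        _ = t ^ 2 * (20 * k ^ 2 * n * (8 * k + 1) ^ 2) := by ring
    refine not_le_twenty_mul_of_sq_le (by omega) (mul_le_of_twenty_mul_sq_mul_le hr hn) hsq' ?_
    linarith [five_mul_sq_add_le_five_mul_sq hr hrk hn]

namespace SimpleGraph

variable {V : Type*} {G : SimpleGraph V}

lemma Walk.IsPath.ne_of_length_ne_zero {x y : V} {p : G.Walk x y} (hp : p.IsPath)
    (h : p.length ≠ 0) : x ≠ y := by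
  rintro rfl
  exact h (Walk.length_eq_zero_iff.2 (Walk.isPath_iff_nil.1 hp))

lemma Walk.IsPath.isCycle_cons_concat {x y w : V} {p : G.Walk x y} (hp : p.IsPath)
    (hxy : x ≠ y) (hxw : G.Adj x w) (hyw : G.Adj y w) (hwp : w ∉ p.support) :
    (Walk.cons hxw.symm (p.concat hyw)).IsCycle := by
  refine (Walk.cons_isCycle_iff _ _).2 ⟨hp.concat hwp hyw, fun h ↦ ?_⟩
  rw [Walk.edges_concat, List.concat_eq_append, List.mem_append, List.mem_singleton,
    Sym2.eq_iff] at h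
  rcases h with h | ⟨rfl, -⟩ | ⟨-, rfl⟩
  · exact hwp (p.fst_mem_support_of_mem_edges h)
  · exact hwp p.end_mem_support
  · exact hxy rfl

lemma Walk.IsPath.cons_concat {x y a b : V} {p : G.Walk x y} (hp : p.IsPath)
    (hax : G.Adj a x) (hyb : G.Adj y b) (hab : a ≠ b) (hap : a ∉ p.support)
    (hbp : b ∉ p.support) : (Walk.cons hax (p.concat hyb)).IsPath := by
  refine (hp.concat hbp hyb).cons ?_
  simpa [Walk.support_concat, hab] using hap

variable [DecidableRel G.Adj]

def degWithin (A : Finset V) (v : V) : ℕ := #{u ∈ A | G.Adj v u}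

lemma degWithin_eq_sum (A : Finset V) (v : V) :
    G.degWithin A v = ∑ u ∈ A, if G.Adj v u then 1 else 0 :=
  card_filter _ _

lemma degWithin_univ [Fintype V] (v : V) : G.degWithin univ v = G.degree v := by
  rw [degWithin, ← card_neighborFinset_eq_degree, neighborFinset_eq_filter]

lemma sum_degWithin_eq_sum_degree [Fintype V] (W : Finset V) :
    ∑ v, G.degWithin W v = ∑ w ∈ W, G.degree w := by
  refine (sum_card_bipartiteAbove_eq_sum_card_bipartiteBelow G.Adj).trans
    (sum_congr rfl fun w _ ↦ ?_)
  rw [← card_neighborFinset_eq_degree, neighborFinset_eq_filter]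
  simp only [bipartiteBelow, G.adj_comm _ w]

variable [DecidableEq V]

lemma degWithin_add_one_le {A : Finset V} {v : V} (hv : v ∈ A) :
    G.degWithin A v + 1 ≤ #A := by
  have : {u ∈ A | G.Adj v u} ⊆ A.erase v := fun u hu ↦
    mem_erase.2 ⟨(G.ne_of_adj (mem_filter.1 hu).2).symm, (mem_filter.1 hu).1⟩
  have := card_le_card this
  rw [card_erase_of_mem hv] at this
  have := card_pos.2 ⟨v, hv⟩
  unfold degWithin
  omega

lemma degWithin_eq_degWithin_erase_add {A : Finset V} {v : V} (hv : v ∈ A) (u : V) :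
    G.degWithin A u = (if G.Adj u v then 1 else 0) + G.degWithin (A.erase v) u := by
  rw [degWithin_eq_sum, degWithin_eq_sum, ← add_sum_erase _ _ hv]

lemma sum_degWithin_erase {A : Finset V} {v : V} (hv : v ∈ A) :
    ∑ u ∈ A, G.degWithin A u
      = ∑ u ∈ A.erase v, G.degWithin (A.erase v) u + 2 * G.degWithin A v := by
  have hv' : G.degWithin (A.erase v) v = G.degWithin A v := by
    simp [G.degWithin_eq_degWithin_erase_add hv v]
  have hsymm : ∑ u ∈ A.erase v, (if G.Adj u v then 1 else 0) = G.degWithin A v := by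
    rw [← hv', degWithin_eq_sum]
    exact sum_congr rfl fun u _ ↦ by simp only [G.adj_comm u v]
  rw [← add_sum_erase _ _ hv, sum_congr rfl fun u _ ↦ G.degWithin_eq_degWithin_erase_add hv u,
    sum_add_distrib, hsymm]
  ring

lemma exists_subset_lt_two_mul_degWithin (d : ℕ) (A : Finset V)
    (hA : #A ^ 2 + (2 * d + 1) * #A < 2 * ∑ v ∈ A, G.degWithin A v) :
    ∃ B ⊆ A, B.Nonempty ∧ ∀ v ∈ B, #B + d < 2 * G.degWithin B v := by
  induction A using Finset.strongInduction with
  | H A ih =>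
  by_cases hgood : ∀ v ∈ A, #A + d < 2 * G.degWithin A v
  · refine ⟨A, subset_rfl, nonempty_iff_ne_empty.2 ?_, hgood⟩
    rintro rfl
    simp at hA
  push Not at hgood
  obtain ⟨v, hv, hbad⟩ := hgood
  have hcard : #A = #(A.erase v) + 1 := (card_erase_add_one hv).symm
  have hsum := G.sum_degWithin_erase hv
  have hA' : #(A.erase v) ^ 2 + (2 * d + 1) * #(A.erase v)
      < 2 * ∑ u ∈ A.erase v, G.degWithin (A.erase v) u := by
    rw [hcard] at hA hbad
    nlinarith
  obtain ⟨B, hBA, hB⟩ := ih _ (erase_ssubset hv) hA'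
  exact ⟨B, hBA.trans (erase_subset v A), hB⟩

lemma exists_path_of_le_degWithin {B : Finset V} {m : ℕ} (hB : B.Nonempty)
    (hdeg : ∀ v ∈ B, m ≤ G.degWithin B v) {ℓ : ℕ} (hℓ : ℓ < m) :
    ∃ (a b : V) (p : G.Walk a b), p.IsPath ∧ p.length = ℓ ∧ ∀ v ∈ p.support, v ∈ B := by
  induction ℓ with
  | zero =>
    obtain ⟨a, ha⟩ := hB
    exact ⟨a, a, .nil, .nil, rfl, by simpa using ha⟩
  | succ ℓ ih =>
    obtain ⟨a, b, p, hp, hlen, hpB⟩ := ih (by omega)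
    obtain ⟨c, hc⟩ : ({u ∈ B | G.Adj b u} \ p.support.toFinset).Nonempty := by
      rw [← card_pos]
      have := le_card_sdiff p.support.toFinset {u ∈ B | G.Adj b u}
      grw [List.toFinset_card_le, Walk.length_support] at this
      have := hdeg b (hpB b p.end_mem_support)
      unfold degWithin at this
      omega
    simp only [mem_sdiff, mem_filter, List.mem_toFinset] at hc
    obtain ⟨⟨hcB, hbc⟩, hcp⟩ := hc
    refine ⟨a, c, p.concat hbc, hp.concat hcp hbc, by simp [hlen], fun v hv ↦ ?_⟩
    rw [Walk.support_concat, List.mem_append, List.mem_singleton] at hv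
    rcases hv with hv | rfl
    exacts [hpB v hv, hcB]

variable [Fintype V]

lemma sum_degree_le_sum_degWithin_sdiff (s : Finset V) :
    ∑ v, G.degree v ≤ ∑ v ∈ univ \ s, G.degWithin (univ \ s) v + 2 * ∑ w ∈ s, G.degree w := by
  induction s using Finset.induction_on with
  | empty => simp [degWithin_univ]
  | insert a s ha ih =>
    have has : a ∈ univ \ s := mem_sdiff.2 ⟨mem_univ a, ha⟩
    have hle : G.degWithin (univ \ s) a ≤ G.degree a :=
      G.degWithin_univ a ▸ card_le_card (filter_subset_filter _ (subset_univ _))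
    have := G.sum_degWithin_erase has
    rw [sum_insert ha, sdiff_insert]
    omega

lemma card_inter_neighborFinset_eq_sum (u v : V) :
    #(G.neighborFinset u ∩ G.neighborFinset v) = ∑ w, if G.Adj w u ∧ G.Adj w v then 1 else 0 := by
  rw [← card_filter]
  congr 1
  ext w
  simp [G.adj_comm w]

lemma sum_sq_degWithin (W : Finset V) :
    ∑ v, G.degWithin W v ^ 2
      = ∑ w₁ ∈ W, ∑ w₂ ∈ W, #(G.neighborFinset w₁ ∩ G.neighborFinset w₂) := by
  simp_rw [card_inter_neighborFinset_eq_sum, degWithin_eq_sum, sq, sum_mul_sum,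
    ite_zero_mul_ite_zero, one_mul]
  rw [sum_comm]
  exact sum_congr rfl fun _ _ ↦ sum_comm

lemma sum_sq_degWithin_le {W : Finset V} {Q : ℕ}
    (hQ : ∀ w₁ ∈ W, ∀ w₂ ∈ W, w₁ ≠ w₂ → #(G.neighborFinset w₁ ∩ G.neighborFinset w₂) ≤ Q) :
    ∑ v, G.degWithin W v ^ 2 ≤ ∑ w ∈ W, G.degree w + Q * #W ^ 2 := by
  have hrow : ∀ w₁ ∈ W, ∑ w₂ ∈ W, #(G.neighborFinset w₁ ∩ G.neighborFinset w₂)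
      ≤ G.degree w₁ + #W * Q := fun w₁ hw₁ ↦ by
    rw [← add_sum_erase _ _ hw₁, inter_self, card_neighborFinset_eq_degree]
    grw [sum_le_card_nsmul (W.erase w₁) _ Q fun w₂ hw₂ ↦ hQ w₁ hw₁ w₂ (mem_of_mem_erase hw₂)
      (ne_of_mem_erase hw₂).symm, card_erase_le, smul_eq_mul]
  calc ∑ v, G.degWithin W v ^ 2
      = ∑ w₁ ∈ W, ∑ w₂ ∈ W, #(G.neighborFinset w₁ ∩ G.neighborFinset w₂) := sum_sq_degWithin W
    _ ≤ ∑ w₁ ∈ W, (G.degree w₁ + #W * Q) := sum_le_sum hrow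
    _ = ∑ w ∈ W, G.degree w + Q * #W ^ 2 := by rw [sum_add_distrib, sum_const, smul_eq_mul]; ring

lemma sq_sum_degree_le {W : Finset V} {Q : ℕ}
    (hQ : ∀ w₁ ∈ W, ∀ w₂ ∈ W, w₁ ≠ w₂ → #(G.neighborFinset w₁ ∩ G.neighborFinset w₂) ≤ Q) :
    (∑ w ∈ W, G.degree w) ^ 2 ≤ Fintype.card V * (∑ w ∈ W, G.degree w + Q * #W ^ 2) := by
  calc (∑ w ∈ W, G.degree w) ^ 2 = (∑ v, G.degWithin W v) ^ 2 := by
        rw [sum_degWithin_eq_sum_degree]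
    _ ≤ Fintype.card V * ∑ v, G.degWithin W v ^ 2 := sq_sum_le_card_mul_sum_sq
    _ ≤ Fintype.card V * (∑ w ∈ W, G.degree w + Q * #W ^ 2) := by grw [sum_sq_degWithin_le hQ]

def Walk.outerCommonNeighbors {x y : V} (p : G.Walk x y) : Finset V :=
  (G.neighborFinset x ∩ G.neighborFinset y) \ p.support.toFinset

lemma Walk.mem_outerCommonNeighbors {x y w : V} {p : G.Walk x y} :
    w ∈ p.outerCommonNeighbors ↔ G.Adj x w ∧ G.Adj y w ∧ w ∉ p.support := by
  simp [outerCommonNeighbors, and_assoc]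

lemma Walk.coe_outerCommonNeighbors {x y : V} (p : G.Walk x y) :
    (p.outerCommonNeighbors : Set V)
      = (G.neighborSet x ∩ G.neighborSet y) \ {v | v ∈ p.support} := by
  ext v
  simp [outerCommonNeighbors]

lemma Walk.IsPath.outerCommonNeighbors_eq_empty {x y : V} {p : G.Walk x y} (hp : p.IsPath)
    (hxy : x ≠ y) (hG : CycleFree (p.length + 2) G) : p.outerCommonNeighbors = ∅ := by
  refine eq_empty_of_forall_notMem fun w hw ↦ ?_
  obtain ⟨hxw, hyw, hwp⟩ := Walk.mem_outerCommonNeighbors.1 hw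
  exact hG w _ (hp.isCycle_cons_concat hxy hxw hyw hwp) (by simp [Walk.length_concat])

lemma card_inter_neighborFinset_le {a b : V} (q : G.Walk a b) :
    #(G.neighborFinset a ∩ G.neighborFinset b) ≤ #q.outerCommonNeighbors + (q.length + 1) := by
  calc #(G.neighborFinset a ∩ G.neighborFinset b)
      ≤ #(q.outerCommonNeighbors ∪ q.support.toFinset) := by
        refine card_le_card fun v hv ↦ ?_
        rw [mem_union, Walk.outerCommonNeighbors, mem_sdiff]
        tauto
    _ ≤ #q.outerCommonNeighbors + #q.support.toFinset := card_union_le _ _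
    _ ≤ #q.outerCommonNeighbors + (q.length + 1) := by
        grw [List.toFinset_card_le, Walk.length_support]

lemma not_cycleFree_of_lt_two_mul_degWithin {k : ℕ} (hk : 1 ≤ k) {B : Finset V}
    (hB : B.Nonempty) (hdeg : ∀ v ∈ B, #B + (2 * k + 1) < 2 * G.degWithin B v) :
    ¬ CycleFree (2 * k + 1) G := by
  intro hG
  have hmin : ∀ v ∈ B, 2 * k + 3 ≤ G.degWithin B v := fun v hv ↦ by
    have := hdeg v hv
    have := G.degWithin_add_one_le hv
    omega
  obtain ⟨a, b, p, hp, hlen, hpB⟩ :=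
    exists_path_of_le_degWithin hB hmin (ℓ := 2 * k - 1) (by omega)
  have hab : a ≠ b := hp.ne_of_length_ne_zero (by omega)
  have hinter : 2 * k + 1 < #({u ∈ B | G.Adj a u} ∩ {u ∈ B | G.Adj b u}) := by
    have := card_inter_add_card_union {u ∈ B | G.Adj a u} {u ∈ B | G.Adj b u}
    have : #({u ∈ B | G.Adj a u} ∪ {u ∈ B | G.Adj b u}) ≤ #B :=
      card_le_card (union_subset (filter_subset _ _) (filter_subset _ _))
    have := hdeg a (hpB a p.start_mem_support)
    have := hdeg b (hpB b p.end_mem_support)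
    unfold degWithin at *
    omega
  obtain ⟨w, hw⟩ :
      (({u ∈ B | G.Adj a u} ∩ {u ∈ B | G.Adj b u}) \ p.support.toFinset).Nonempty := by
    rw [← card_pos]
    have := le_card_sdiff p.support.toFinset ({u ∈ B | G.Adj a u} ∩ {u ∈ B | G.Adj b u})
    grw [List.toFinset_card_le, Walk.length_support] at this
    omega
  have hw' : w ∈ p.outerCommonNeighbors := by
    simp only [mem_sdiff, mem_inter, mem_filter, List.mem_toFinset] at hw
    exact Walk.mem_outerCommonNeighbors.2 ⟨hw.1.1.2, hw.1.2.2, hw.2⟩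
  rw [hp.outerCommonNeighbors_eq_empty hab (by rw [hlen]; convert hG using 1; omega)] at hw'
  simp at hw'

lemma not_cycleFree_of_sq_add_lt {k : ℕ} (hk : 1 ≤ k) (A : Finset V)
    (hA : #A ^ 2 + (4 * k + 3) * #A < 2 * ∑ v ∈ A, G.degWithin A v) :
    ¬ CycleFree (2 * k + 1) G := by
  obtain ⟨B, -, hB, hdeg⟩ :=
    G.exists_subset_lt_two_mul_degWithin (2 * k + 1) A (by convert hA using 3; ring)
  exact not_cycleFree_of_lt_two_mul_degWithin hk hB hdeg

lemma card_le_of_card_inter_neighborFinset_le {r k : ℕ} (hr : 1 ≤ r) (hrk : r + 4 ≤ 2 * k)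
    (hn : 20 * (r + 2) ^ 2 * k ≤ Fintype.card V) (hG : CycleFree (2 * k + 1) G)
    (he : (Fintype.card V - r + 1) ^ 2 ≤ 4 * #G.edgeFinset + 3) {W : Finset V}
    (hW : ∀ w₁ ∈ W, ∀ w₂ ∈ W, w₁ ≠ w₂ →
      #(G.neighborFinset w₁ ∩ G.neighborFinset w₂) ≤ 10 * k) :
    #W ≤ 8 * k := by
  by_contra! hWk
  obtain ⟨U, -, hU, hUdeg⟩ :=
    W.exists_subset_card_eq_card_mul_sum_le (fun v ↦ G.degree v) (m := 8 * k + 1) hWk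
  have hmargin :=
    sq_add_four_mul_le_sq_of_degree_sums hr hrk hn hWk (G.sq_sum_degree_le hW) hUdeg
  have hdeg := G.sum_degree_le_sum_degWithin_sdiff U
  rw [sum_degrees_eq_twice_card_edges] at hdeg
  have hcard : #(univ \ U) = Fintype.card V - (8 * k + 1) := by
    rw [card_sdiff_of_subset (subset_univ U), hU, card_univ]
  have hpos : 1 ≤ Fintype.card V - (8 * k + 1) := by
    have := mul_le_of_twenty_mul_sq_mul_le hr hn
    omega
  refine G.not_cycleFree_of_sq_add_lt (by omega) (univ \ U) ?_ hG
  rw [hcard]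
  linarith

lemma card_outerCommonNeighbors_le {r k : ℕ} (hr : 1 ≤ r) (hrk : r + 4 ≤ 2 * k)
    (hn : 20 * (r + 2) ^ 2 * k ≤ Fintype.card V) (hG : CycleFree (2 * k + 1) G)
    (he : (Fintype.card V - r + 1) ^ 2 ≤ 4 * #G.edgeFinset + 3) (i : ℕ) :
    ∀ {x y : V} (p : G.Walk x y), p.IsPath → p.length + 1 + 2 * i = 2 * k →
      #p.outerCommonNeighbors ≤ 8 * k := by
  induction i with
  | zero =>
    intro x y p hp hlen
    rw [hp.outerCommonNeighbors_eq_empty (hp.ne_of_length_ne_zero (by omega))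
      (by rwa [show p.length + 2 = 2 * k + 1 by omega]), card_empty]
    exact Nat.zero_le _
  | succ i ih =>
    intro x y p hp hlen
    refine card_le_of_card_inter_neighborFinset_le hr hrk hn hG he fun w₁ hw₁ w₂ hw₂ hne ↦ ?_
    obtain ⟨hxw₁, -, hw₁p⟩ := Walk.mem_outerCommonNeighbors.1 hw₁
    obtain ⟨-, hyw₂, hw₂p⟩ := Walk.mem_outerCommonNeighbors.1 hw₂
    have hq := hp.cons_concat hxw₁.symm hyw₂ hne hw₁p hw₂p
    have hqlen : (Walk.cons hxw₁.symm (p.concat hyw₂)).length = p.length + 2 := by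
      simp [Walk.length_concat]
    have := ih _ hq (by omega)
    grw [card_inter_neighborFinset_le, this, hqlen]
    omega

end SimpleGraph

theorem common_nbrs_of_even_path_le_general (r k n : ℕ) (hr : 1 ≤ r)
    (hrk : r + 4 ≤ 2 * k) (hn : 20 * (r + 2) ^ 2 * k ≤ n)
    (G : SimpleGraph (Fin n)) (hfree : CycleFree (2 * k + 1) G)
    (he : (n - r + 1) ^ 2 / 4 + r.choose 2 ≤ G.edgeSet.ncard)
    (x y : Fin n) (P : G.Walk x y) (hP : P.IsPath)
    (heven : Even (P.length + 1)) (hord : P.length + 1 ≤ 2 * k) :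
    ((G.neighborSet x ∩ G.neighborSet y) \ {v | v ∈ P.support}).ncard ≤ 8 * k := by
  classical
  obtain ⟨c, hc⟩ := heven
  rw [← SimpleGraph.coe_edgeFinset, Set.ncard_coe_finset] at he
  rw [← P.coe_outerCommonNeighbors, Set.ncard_coe_finset]
  exact G.card_outerCommonNeighbors_le hr hrk (by rwa [Fintype.card_fin]) hfree
    (by rw [Fintype.card_fin]; omega) (k - c) P hP (by omega)

/-- Lemma 2.2: let `r, k, n` be positive integers with `2k ≥ r + 4`, `n ≥ 20(r+2)²k`, and
let `G` be a `C_{2k+1}`-free graph on `n` vertices with `e(G) ≥ ⌊(n-r+1)²/4⌋ + C(r,2)`.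
Then for every path `P_{xy}` in `G` of even order at most `2k`,
`|(N(x) ∩ N(y)) \ V(P_{xy})| ≤ 8k`. -/
theorem common_nbrs_of_even_path_le (r k n : ℕ) (hr : 1 ≤ r) (hk : 1 ≤ k)
    (hrk : r + 4 ≤ 2 * k) (hn : 20 * (r + 2) ^ 2 * k ≤ n)
    (G : SimpleGraph (Fin n)) (hfree : CycleFree (2 * k + 1) G)
    (he : (n - r + 1) ^ 2 / 4 + r.choose 2 ≤ G.edgeSet.ncard)
    (x y : Fin n) (P : G.Walk x y) (hP : P.IsPath)
    (heven : Even (P.length + 1)) (hord : P.length + 1 ≤ 2 * k) :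
    ((G.neighborSet x ∩ G.neighborSet y) \ {v | v ∈ P.support}).ncard ≤ 8 * k :=
  common_nbrs_of_even_path_le_general r k n hr hrk hn G hfree he x y P hP heven hord
end

section
/- Let m ≥ 2 and let C be an odd cycle of length 2m+1 in a graph G such that G contains no odd cycle of length strictly smaller than 2m+1. Then every vertex v ∈ V(G)\V(C) has at most 2 neighbors on C, i.e., |N(v) ∩ V(C)| ≤ 2. -/
/-!
Suppose `v` had three neighbours `a, b, b'` on `C`. They cut `C` into three arcs of total length
`2m + 1`. An arc of odd length `ℓ` between two neighbours of `v` closes up through `v` into an odd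
cycle of length `ℓ + 2`, so `ℓ ≥ 2m - 1`. Since the total is odd, one or three arcs are odd; one
odd arc forces total length at least `(2m - 1) + 2 + 2`, three force at least `3(2m - 1)`, and both
exceed `2m + 1` when `m ≥ 2`.
-/

namespace SimpleGraph

variable {V : Type*} {G : SimpleGraph V}

def NoOddCycleShorterThan (G : SimpleGraph V) (n : ℕ) : Prop :=
  ∀ (u : V) (d : G.Walk u u), d.IsCycle → Odd d.length → n ≤ d.length

namespace Walk

lemma IsPath.isCycle_cons_concat_s14 {v x y : V} {p : G.Walk x y} (hp : p.IsPath)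
    (hxy : x ≠ y) (hv : v ∉ p.support) (hvx : G.Adj v x) (hyv : G.Adj y v) :
    (cons hvx (p.concat hyv)).IsCycle := by
  rw [cons_isCycle_iff, edges_concat, List.concat_eq_append, List.mem_append,
    List.mem_singleton, not_or]
  refine ⟨hp.concat hv hyv, fun h => hv (p.fst_mem_support_of_mem_edges h), ?_⟩
  simp [hxy, hyv.ne']

variable [DecidableEq V]

lemma IsCycle.exists_three_paths {a b c : V} {d : G.Walk a a} (hd : d.IsCycle)
    (hb : b ∈ d.support) (hc : c ∈ d.support) (hab : a ≠ b) :
    ∃ (x y : V) (p₁ : G.Walk a x) (p₂ : G.Walk x y) (p₃ : G.Walk y a),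
      (x = b ∧ y = c ∨ x = c ∧ y = b) ∧ p₁.IsPath ∧ p₂.IsPath ∧ p₃.IsPath ∧
      p₁.support ⊆ d.support ∧ p₂.support ⊆ d.support ∧ p₃.support ⊆ d.support ∧
      p₁.length + p₂.length + p₃.length = d.length := by
  have hsplit := d.take_spec hb
  set P := d.takeUntil b hb
  set Q := d.dropUntil b hb
  have hP : P.IsPath := hd.isPath_takeUntil hb
  have hQ : Q.IsPath := IsCycle.isPath_of_append_right (not_nil_of_ne hab) (hsplit ▸ hd)
  have hlen : P.length + Q.length = d.length := by rw [← length_append, hsplit]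
  have hPd : P.support ⊆ d.support := d.support_takeUntil_subset_support hb
  have hQd : Q.support ⊆ d.support := d.support_dropUntil_subset_support hb
  rcases (mem_support_append_iff P Q).mp (hsplit ▸ hc) with hcP | hcQ
  · have := congrArg length (P.take_spec hcP)
    rw [length_append] at this
    exact ⟨c, b, P.takeUntil c hcP, P.dropUntil c hcP, Q, .inr ⟨rfl, rfl⟩, hP.takeUntil hcP,
      hP.dropUntil hcP, hQ, List.Subset.trans (P.support_takeUntil_subset_support hcP) hPd,
      List.Subset.trans (P.support_dropUntil_subset_support hcP) hPd, hQd, by omega⟩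
  · have := congrArg length (Q.take_spec hcQ)
    rw [length_append] at this
    exact ⟨b, c, P, Q.takeUntil c hcQ, Q.dropUntil c hcQ, .inl ⟨rfl, rfl⟩, hP,
      hQ.takeUntil hcQ, hQ.dropUntil hcQ, hPd,
      List.Subset.trans (Q.support_takeUntil_subset_support hcQ) hQd,
      List.Subset.trans (Q.support_dropUntil_subset_support hcQ) hQd, by omega⟩

end Walk

lemma NoOddCycleShorterThan.le_length_add_two {n : ℕ} (hG : G.NoOddCycleShorterThan n)
    {v x y : V} {p : G.Walk x y} (hp : p.IsPath) (hxy : x ≠ y) (hv : v ∉ p.support)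
    (hvx : G.Adj v x) (hvy : G.Adj v y) (hodd : Odd p.length) : n ≤ p.length + 2 := by
  have := hG v _ (hp.isCycle_cons_concat_s14 hxy hv hvx hvy.symm)
  simp only [Walk.length_cons, Walk.length_concat] at this
  exact this (by rw [add_assoc]; exact hodd.add_even even_two)

end SimpleGraph

lemma exists_odd_add_two_lt_of_add_add_eq {m a b c : ℕ} (hm : 2 ≤ m) (ha : a ≠ 0) (hb : b ≠ 0)
    (hc : c ≠ 0) (hsum : a + b + c = 2 * m + 1) : ∃ ℓ ∈ [a, b, c], Odd ℓ ∧ ℓ + 2 < 2 * m + 1 := by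
  simp only [List.mem_cons, List.not_mem_nil, or_false, exists_eq_or_imp, exists_eq_left,
    Nat.odd_iff]
  omega

open SimpleGraph Walk

/-- Claim 2.5: let `m ≥ 2` and let `C` be an odd cycle of length `2m + 1` in a graph `G`
containing no odd cycle of length strictly smaller than `2m + 1`.  Then every vertex
`v ∉ V(C)` has at most two neighbours on `C`. -/
theorem nbrs_on_shortest_odd_cycle_le_two {V : Type*} (G : SimpleGraph V) (m : ℕ)
    (hm : 2 ≤ m) (w : V) (c : G.Walk w w) (hc : c.IsCycle) (hlen : c.length = 2 * m + 1)
    (hmin : ∀ (u : V) (d : G.Walk u u), d.IsCycle → Odd d.length → 2 * m + 1 ≤ d.length)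
    (v : V) (hv : v ∉ c.support) :
    {u | u ∈ c.support ∧ G.Adj v u}.ncard ≤ 2 := by
  classical
  have hG : G.NoOddCycleShorterThan (2 * m + 1) := hmin
  by_contra! hcard
  obtain ⟨a, b, b', ⟨ha, hva⟩, ⟨hb, hvb⟩, ⟨hb', hvb'⟩, hab, hab', hbb'⟩ :=
    (Set.two_lt_ncard_iff (c.support.finite_toSet.subset fun u hu => hu.1)).mp hcard
  obtain ⟨x, y, p₁, p₂, p₃, hxy, hp₁, hp₂, hp₃, hs₁, hs₂, hs₃, hsum⟩ :=
    (hc.rotate ha).exists_three_paths ((c.mem_support_rotate_iff a ha).mpr hb)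
      ((c.mem_support_rotate_iff a ha).mpr hb') hab
  obtain ⟨hvx, hvy, hax, hay, hxy⟩ : G.Adj v x ∧ G.Adj v y ∧ a ≠ x ∧ a ≠ y ∧ x ≠ y := by
    rcases hxy with ⟨rfl, rfl⟩ | ⟨rfl, rfl⟩ <;> tauto
  have hvd : v ∉ (c.rotate a ha).support := by rwa [mem_support_rotate_iff]
  have hodd : ∀ ℓ ∈ [p₁.length, p₂.length, p₃.length], Odd ℓ → 2 * m + 1 ≤ ℓ + 2 := by
    simp only [List.mem_cons, List.not_mem_nil, or_false, forall_eq_or_imp, forall_eq]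
    exact ⟨hG.le_length_add_two hp₁ hax (fun h => hvd (hs₁ h)) hva hvx,
      hG.le_length_add_two hp₂ hxy (fun h => hvd (hs₂ h)) hvx hvy,
      hG.le_length_add_two hp₃ hay.symm (fun h => hvd (hs₃ h)) hvy hva⟩
  obtain ⟨ℓ, hℓ, hℓodd, hshort⟩ := exists_odd_add_two_lt_of_add_add_eq hm
    (mt eq_of_length_eq_zero hax) (mt eq_of_length_eq_zero hxy)
    (mt eq_of_length_eq_zero hay.symm) (by simpa [hlen] using hsum)
  exact hshort.not_ge (hodd ℓ hℓ hℓodd)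
end
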